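/- Let R = k[x,y] and V ⊆ R_j with V ≠ 0. Then τ(V) = 1 if and only if V = f·R_{j−c} for some homogeneous form f of degree c = j+1−dim V (the codimension of V in R_j). -/

import Mathlib

/-!
Write `x = X 0`, `y = X 1` and `d = dim V`. Since `R₁V = xV + yV` and `xW ⊄ yW` for every
`W ≠ 0` (otherwise every element of `W` would be divisible by all powers of `y`), always
`τ(W) ≥ 1`. If `τ(V) = 1` and `d ≥ 2`, then `xV ∩ yV` has dimension `d - 1` and equals `yU` for
`U = {v ∈ V | yv ∈ xV}`; as `R₁U ⊆ xV` and `dim R₁U ≥ dim U + 1 = d`, this forces `R₁U = xV`,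
so `τ(U) = 1`. By induction on `d`, `U = f·R_{d-2}`, hence `xV = f·R_{d-1}`; then `x ∣ f`
(look at `f·y^{d-1}`) and cancelling `x` gives `V = (f/x)·R_{d-1}`. The converse is the count
`dim f·R_m = m + 1`.
-/

open MvPolynomial Submodule

variable {k : Type*} [Field k]

noncomputable abbrev Rh (k : Type*) [Field k] (i : ℕ) :
    Submodule k (MvPolynomial (Fin 2) k) :=
  MvPolynomial.homogeneousSubmodule (Fin 2) k i

noncomputable def mulV (i : ℕ) (V : Submodule k (MvPolynomial (Fin 2) k)) :
    Submodule k (MvPolynomial (Fin 2) k) :=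
  Submodule.span k {p | ∃ h ∈ Rh k i, ∃ f ∈ V, p = h * f}

open Module
open LinearMap (mulLeft)

lemma MvPolynomial.IsHomogeneous.of_X_mul {σ R : Type*} [CommSemiring R] {i : σ}
    {p : MvPolynomial σ R} {n : ℕ} (h : (X i * p).IsHomogeneous (n + 1)) :
    p.IsHomogeneous n := by
  intro d hd
  have := h (d := Finsupp.single i 1 + d) (by rwa [coeff_X_mul])
  rw [map_add, Finsupp.weight_single, Pi.one_apply, one_smul] at this
  omega

instance finiteDimensional_Rh (m : ℕ) : FiniteDimensional k (Rh k m) :=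
  Module.Finite.iff_fg.mpr (homogeneousSubmodule_fg _ _ m)

lemma finrank_Rh (m : ℕ) : finrank k (Rh k m) = m + 1 := by
  let e : Sym (Fin 2) m ≃ {d : Fin 2 →₀ ℕ | d.degree = m} :=
    (Sym.equivNatSum (Fin 2) m).trans (Equiv.subtypeEquivRight fun _ => .rfl)
  rw [Rh, homogeneousSubmodule_eq_finsupp_supported,
    (AddMonoidAlgebra.supportedEquivFinsupp _).finrank_eq,
    ← (Finsupp.domLCongr (M := k) (R := k) e).finrank_eq, finrank_finsupp_self,
    Sym.card_sym_eq_multichoose, Fintype.card_fin, Nat.multichoose_two]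

lemma mulV_eq_mul (i : ℕ) (V : Submodule k (MvPolynomial (Fin 2) k)) :
    mulV i V = Rh k i * V := by
  rw [mulV, mul_eq_span_mul_set]
  congr 1
  ext p
  simp [Set.mem_mul, eq_comm]

lemma map_mulLeft_eq_span_mul {A : Type*} [CommRing A] [Algebra k A] (f : A) (W : Submodule k A) :
    map (mulLeft k f) W = span k {f} * W :=
  span_singleton_mul.symm

lemma mulV_map_mulLeft (i : ℕ) (f : MvPolynomial (Fin 2) k)
    (W : Submodule k (MvPolynomial (Fin 2) k)) :
    mulV i (map (mulLeft k f) W) = map (mulLeft k f) (mulV i W) := by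
  simp only [mulV_eq_mul, map_mulLeft_eq_span_mul]
  exact mul_left_comm _ _ _

lemma mulV_one_Rh (m : ℕ) : mulV 1 (Rh k m) = Rh k (m + 1) := by
  unfold Rh
  rw [mulV_eq_mul, ← homogeneousSubmodule_one_pow (σ := Fin 2) k m,
    ← homogeneousSubmodule_one_pow (σ := Fin 2) k (m + 1), pow_succ']

lemma mulV_one_eq_sup (V : Submodule k (MvPolynomial (Fin 2) k)) :
    mulV 1 V = map (mulLeft k (X 0)) V ⊔ map (mulLeft k (X 1)) V := by
  have : Set.range (X : Fin 2 → MvPolynomial (Fin 2) k) = {X 0, X 1} := by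
    ext; simp [Fin.exists_fin_two, eq_comm]
  rw [mulV_eq_mul, Rh, homogeneousSubmodule_one_eq_span_X, this, span_insert, Submodule.sup_mul,
    map_mulLeft_eq_span_mul, map_mulLeft_eq_span_mul]

lemma finrank_map_mulLeft {A : Type*} [CommRing A] [IsDomain A] [Algebra k A] {f : A}
    (hf : f ≠ 0) (W : Submodule k A) :
    finrank k (map (mulLeft k f) W) = finrank k W :=
  (LinearEquiv.finrank_eq (equivMapOfInjective _ (mul_right_injective₀ hf) W)).symm

lemma map_mulLeft_X_not_le {i j : Fin 2} (hij : i ≠ j)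
    {W : Submodule k (MvPolynomial (Fin 2) k)} (hW : W ≠ ⊥) :
    ¬ map (mulLeft k (X i)) W ≤ map (mulLeft k (X j)) W := by
  intro hle
  have hdvd : ∀ n, ∀ w ∈ W, (X j : MvPolynomial (Fin 2) k) ^ n ∣ w := by
    intro n
    induction n with
    | zero => simp
    | succ n ih =>
      intro w hw
      obtain ⟨w', hw', hw'w⟩ := hle ⟨w, hw, rfl⟩
      refine X_prime.pow_dvd_of_dvd_mul_left _ (X_dvd_X.not.mpr hij.symm) ?_
      rw [← LinearMap.mulLeft_apply (R := k), ← hw'w, LinearMap.mulLeft_apply, pow_succ']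
      exact mul_dvd_mul_left _ (ih w' hw')
  obtain ⟨w, hw, hw0⟩ := W.ne_bot_iff.mp hW
  obtain ⟨n, hn⟩ := FiniteMultiplicity.of_prime_left X_prime hw0
  exact hn (hdvd (n + 1) w hw)

lemma finrank_lt_finrank_mulV_one {W : Submodule k (MvPolynomial (Fin 2) k)}
    [FiniteDimensional k W] (hW : W ≠ ⊥) : finrank k W < finrank k (mulV 1 W) := by
  rw [mulV_one_eq_sup, ← finrank_map_mulLeft (X_ne_zero 0) W]
  exact finrank_lt_finrank_of_lt (left_lt_sup.mpr (map_mulLeft_X_not_le (by decide) hW))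

lemma exists_eq_X_mul_of_map_mulLeft_X_zero_eq {V : Submodule k (MvPolynomial (Fin 2) k)}
    {f : MvPolynomial (Fin 2) k} {m : ℕ}
    (h : map (mulLeft k (X 0)) V = map (mulLeft k f) (Rh k m)) :
    ∃ g, f = X 0 * g ∧ V = map (mulLeft k g) (Rh k m) := by
  obtain ⟨v, -, hv⟩ : f * X 1 ^ m ∈ map (mulLeft k (X 0)) V :=
    h ▸ ⟨X 1 ^ m, isHomogeneous_X_pow 1 m, rfl⟩
  have hX : ¬ (X 0 : MvPolynomial (Fin 2) k) ∣ X 1 ^ m :=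
    fun hd => absurd (X_prime.dvd_of_dvd_pow hd) (X_dvd_X.not.mpr (by decide))
  obtain ⟨g, rfl⟩ := (X_prime.dvd_or_dvd ⟨v, hv.symm⟩).resolve_right hX
  refine ⟨g, rfl, map_injective_of_injective (f := mulLeft k (X 0))
    (mul_right_injective₀ (X_ne_zero 0)) ?_⟩
  rw [h, ← map_comp, LinearMap.mulLeft_mul]

lemma exists_mulV_one_eq_map_mulLeft_X_zero {V : Submodule k (MvPolynomial (Fin 2) k)}
    [FiniteDimensional k V] {n : ℕ} (hd : finrank k V = n + 2)
    (hτ : finrank k (mulV 1 V) = n + 3) :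
    ∃ U ≤ V, finrank k U = n + 1 ∧ mulV 1 U = map (mulLeft k (X 0)) V := by
  set x := mulLeft k (X 0 : MvPolynomial (Fin 2) k)
  set y := mulLeft k (X 1 : MvPolynomial (Fin 2) k)
  have hx : finrank k (map x V) = n + 2 := (finrank_map_mulLeft (X_ne_zero 0) V).trans hd
  have hy : finrank k (map y V) = n + 2 := (finrank_map_mulLeft (X_ne_zero 1) V).trans hd
  have hinf : finrank k ↥(map x V ⊓ map y V) = n + 1 := by
    have := finrank_sup_add_finrank_inf_eq (map x V) (map y V)
    rw [← mulV_one_eq_sup] at this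
    omega
  set U := V ⊓ comap y (map x V)
  have hyU : map y U = map x V ⊓ map y V := by rw [inf_comm, map_inf_eq_map_inf_comap]
  have hU : finrank k U = n + 1 := by
    rw [← finrank_map_mulLeft (X_ne_zero 1), ← hinf, hyU]
  have hle : mulV 1 U ≤ map x V := by
    rw [mulV_one_eq_sup]
    exact sup_le (map_mono inf_le_left) (hyU ▸ inf_le_left)
  have hlt := finrank_lt_finrank_mulV_one (W := U) fun h => by rw [h, finrank_bot] at hU; omega
  exact ⟨U, inf_le_left, hU, eq_of_le_of_finrank_le hle (by omega)⟩

theorem exists_eq_map_mulLeft_Rh_of_finrank_mulV_one {j : ℕ} (n : ℕ)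
    {V : Submodule k (MvPolynomial (Fin 2) k)} (hV : V ≤ Rh k j) (hd : finrank k V = n + 1)
    (hτ : finrank k (mulV 1 V) = n + 2) :
    ∃ f ∈ Rh k (j - n), V = map (mulLeft k f) (Rh k n) := by
  induction n generalizing V with
  | zero =>
    have : FiniteDimensional k V := finiteDimensional_of_le hV
    obtain ⟨g, hgV, hg0⟩ := V.ne_bot_iff.mp (by rintro rfl; simp at hd)
    have hVg : span k {g} = V := eq_of_le_of_finrank_le (span_singleton_le_iff_mem _ _ |>.mpr hgV)
      (by rw [hd, finrank_span_singleton hg0])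
    refine ⟨g, hV hgV, ?_⟩
    rw [Rh, homogeneousSubmodule_zero, map_mulLeft_eq_span_mul, mul_one, hVg]
  | succ n ih =>
    have : FiniteDimensional k V := finiteDimensional_of_le hV
    obtain ⟨U, hUV, hU, hxV⟩ := exists_mulV_one_eq_map_mulLeft_X_zero hd hτ
    obtain ⟨f, hf, rfl⟩ := ih (hUV.trans hV) hU
      (by rw [hxV, finrank_map_mulLeft (X_ne_zero 0), hd])
    rw [mulV_map_mulLeft, mulV_one_Rh] at hxV
    obtain ⟨g, rfl, hVg⟩ := exists_eq_X_mul_of_map_mulLeft_X_zero_eq hxV.symm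
    have hnj : j - n = j - (n + 1) + 1 := by
      have := finrank_mono hV
      rw [finrank_Rh, hd] at this
      omega
    exact ⟨g, (hnj ▸ hf).of_X_mul, hVg⟩

lemma finrank_mulV_one_map_mulLeft_Rh {f : MvPolynomial (Fin 2) k} (hf : f ≠ 0) (m : ℕ) :
    finrank k (mulV 1 (map (mulLeft k f) (Rh k m))) =
      finrank k (map (mulLeft k f) (Rh k m)) + 1 := by
  rw [mulV_map_mulLeft, mulV_one_Rh, finrank_map_mulLeft hf, finrank_map_mulLeft hf,
    finrank_Rh, finrank_Rh]

/-- For a nonzero subspace `V ⊆ R_j`, `τ(V) = 1` iff `V = f · R_{j−c}` for a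
homogeneous form `f` of degree `c = j+1−dim V`. -/
theorem tau_eq_one_iff (j : ℕ) (V : Submodule k (MvPolynomial (Fin 2) k))
    (hV : V ≤ Rh k j) (hne : V ≠ ⊥) :
    (Module.finrank k (mulV 1 V) : ℤ) - (Module.finrank k V : ℤ) = 1 ↔
      ∃ f ∈ Rh k (j + 1 - Module.finrank k V),
        V = Submodule.map (LinearMap.mulLeft k f)
          (Rh k (j - (j + 1 - Module.finrank k V))) := by
  have : FiniteDimensional k V := finiteDimensional_of_le hV
  obtain ⟨n, hn⟩ := Nat.exists_eq_succ_of_ne_zero (mt Submodule.finrank_eq_zero.mp hne)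
  have hnj : n ≤ j := by
    have := finrank_mono hV
    rw [finrank_Rh, hn] at this
    omega
  rw [hn, show j + 1 - (n + 1) = j - n by omega, show j - (j - n) = n by omega]
  constructor
  · intro hτ
    exact exists_eq_map_mulLeft_Rh_of_finrank_mulV_one n hV hn (by omega)
  · rintro ⟨f, -, rfl⟩
    have hf : f ≠ 0 := by
      rintro rfl
      simp at hne
    rw [finrank_mulV_one_map_mulLeft_Rh hf, hn]
    omega
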